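/- Let S be a random m×n real matrix and ε, δ ∈ (0,1). If S has the strong (ε,δ)-JL moment property, then for any positive integers a and b, the random matrix M = I_a ⊗ S ⊗ I_b (Kronecker product with identity matrices) also has the strong (ε,δ)-JL moment property: for every unit vector y ∈ ℝ^{a·n·b} and every integer p with 2 ≤ p ≤ log(1/δ), E|‖My‖₂² − 1|^p ≤ (ε/e)^p·(p/log(1/δ))^{p/2} and E‖My‖₂² = 1. -/

import Mathlib

open MeasureTheory ProbabilityTheory Matrix Kronecker

/-- The squared Euclidean norm of a finitely-indexed real vector. -/
noncomputable def sqNorm {ι : Type*} [Fintype ι] (v : ι → ℝ) : ℝ := ∑ i, v i ^ 2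

/-- A random matrix `S` has the strong `(ε,δ)`-JL moment property if for every unit vector `x`
and every integer `2 ≤ p ≤ log(1/δ)`,
`E|‖Sx‖₂² − 1|^p ≤ (ε/e)^p·(p/log(1/δ))^{p/2}`, and `E‖Sx‖₂² = 1`. -/
def HasStrongJL {Ω : Type*} [MeasurableSpace Ω] (μ : Measure Ω)
    {ι κ : Type*} [Fintype ι] [Fintype κ] (S : Ω → Matrix ι κ ℝ) (ε δ : ℝ) : Prop :=
  ∀ x : κ → ℝ, sqNorm x = 1 →
    (∀ p : ℕ, 2 ≤ p → (p : ℝ) ≤ Real.log (1 / δ) →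
      (∫ ω, |sqNorm (S ω *ᵥ x) - 1| ^ p ∂μ) ≤
        (ε / Real.exp 1) ^ p * ((p : ℝ) / Real.log (1 / δ)) ^ ((p : ℝ) / 2)) ∧
    (∫ ω, sqNorm (S ω *ᵥ x) ∂μ) = 1

/-!
Cut `y` into the slices `y_k = y ((i, ·), j)`, `k = (i, j)`. Then
`‖(I_a ⊗ S ⊗ I_b) y‖² = ∑ₖ ‖S y_k‖² = ∑ₖ w_k Z_k` with weights `w_k = ‖y_k‖²` summing
to `1` and `Z_k = ‖S y_k‖² / ‖y_k‖²`. The JL property is invariant under rescaling the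
input vector, so every `Z_k` with `w_k ≠ 0` has mean `1` and the required moment bounds.
Hence the mean of `∑ₖ w_k Z_k` is `1`, and Jensen's inequality for the convex function
`|· - 1| ^ p` bounds its `p`-th moment by `∑ₖ w_k E|Z_k - 1| ^ p`. The integrability this
needs comes from the domination `w_k Z_k ≤ ∑ⱼ w_j Z_j`.
-/

lemma sqNorm_nonneg {ι : Type*} [Fintype ι] (v : ι → ℝ) : 0 ≤ sqNorm v :=
  Finset.sum_nonneg fun _ _ => sq_nonneg _

lemma sqNorm_eq_zero {ι : Type*} [Fintype ι] {v : ι → ℝ} : sqNorm v = 0 ↔ v = 0 := by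
  rw [sqNorm, Fintype.sum_eq_zero_iff_of_nonneg fun i => sq_nonneg (v i)]
  simp [funext_iff]

lemma sqNorm_smul {ι : Type*} [Fintype ι] (c : ℝ) (v : ι → ℝ) :
    sqNorm (c • v) = c ^ 2 * sqNorm v := by
  simp [sqNorm, Finset.mul_sum, mul_pow]

lemma sqNorm_mul_div_sqNorm {ι κ : Type*} [Fintype ι] [Fintype κ]
    (A : Matrix ι κ ℝ) (v : κ → ℝ) :
    sqNorm v * (sqNorm (A *ᵥ v) / sqNorm v) = sqNorm (A *ᵥ v) := by
  by_cases hv : sqNorm v = 0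
  · simp [sqNorm_eq_zero.1 hv, sqNorm]
  · field_simp

section Kronecker

variable {α β κ : Type*} [Fintype α] [Fintype β] [Fintype κ]

def midSlice (y : (α × κ) × β → ℝ) (k : α × β) : κ → ℝ := fun c => y ((k.1, c), k.2)

lemma sum_sqNorm_midSlice (y : (α × κ) × β → ℝ) :
    ∑ k, sqNorm (midSlice y k) = sqNorm y := by
  simp only [sqNorm, midSlice, Fintype.sum_prod_type]
  exact Finset.sum_congr rfl fun _ _ => Finset.sum_comm

lemma midSlice_one_kronecker_kronecker_one_mulVec [DecidableEq α] [DecidableEq β] {ι : Type*}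
    [Fintype ι] (A : Matrix ι κ ℝ) (y : (α × κ) × β → ℝ) (k : α × β) :
    midSlice ((((1 : Matrix α α ℝ) ⊗ₖ A) ⊗ₖ (1 : Matrix β β ℝ)) *ᵥ y) k =
      A *ᵥ midSlice y k := by
  ext r
  simp [midSlice, mulVec, dotProduct, one_apply, Fintype.sum_prod_type, ite_mul,
    Finset.sum_ite_eq]

lemma sqNorm_one_kronecker_kronecker_one_mulVec [DecidableEq α] [DecidableEq β] {ι : Type*}
    [Fintype ι] (A : Matrix ι κ ℝ) (y : (α × κ) × β → ℝ) :
    sqNorm ((((1 : Matrix α α ℝ) ⊗ₖ A) ⊗ₖ (1 : Matrix β β ℝ)) *ᵥ y) =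
      ∑ k, sqNorm (A *ᵥ midSlice y k) := by
  simp only [← sum_sqNorm_midSlice, midSlice_one_kronecker_kronecker_one_mulVec]

end Kronecker

lemma abs_sum_mul_sub_one_pow_le {ι : Type*} [Fintype ι] {w : ι → ℝ} (hw0 : ∀ i, 0 ≤ w i)
    (hw1 : ∑ i, w i = 1) (z : ι → ℝ) (p : ℕ) :
    |∑ i, w i * z i - 1| ^ p ≤ ∑ i, w i * |z i - 1| ^ p := by
  have hsub : ∑ i, w i * z i - 1 = ∑ i, w i * (z i - 1) := by
    simp only [mul_sub, mul_one, Finset.sum_sub_distrib, hw1]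
  have habs : |∑ i, w i * (z i - 1)| ≤ ∑ i, w i * |z i - 1| :=
    (Finset.abs_sum_le_sum_abs _ _).trans_eq <| by simp only [abs_mul, abs_of_nonneg (hw0 _)]
  calc |∑ i, w i * z i - 1| ^ p ≤ (∑ i, w i * |z i - 1|) ^ p := by
        rw [hsub]; exact pow_le_pow_left₀ (abs_nonneg _) habs p
    _ ≤ ∑ i, w i * |z i - 1| ^ p :=
        Real.pow_arith_mean_le_arith_mean_pow _ w _ (fun i _ => hw0 i) hw1
          (fun i _ => abs_nonneg _) p

section Moments

variable {Ω : Type*} [MeasurableSpace Ω] {μ : Measure Ω} {ι : Type*} [Fintype ι]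
  {w : ι → ℝ} {Z : ι → Ω → ℝ}

lemma integral_sum_mul_eq_one (hw1 : ∑ i, w i = 1)
    (hmean : ∀ i, w i ≠ 0 → ∫ ω, Z i ω ∂μ = 1) : ∫ ω, ∑ i, w i * Z i ω ∂μ = 1 := by
  have hint : ∀ i, Integrable (fun ω => w i * Z i ω) μ := fun i => by
    by_cases hi : w i = 0
    · simp [hi]
    · exact (Integrable.of_integral_ne_zero (by simp [hmean i hi])).const_mul _
  rw [integral_finsetSum _ fun i _ => hint i, ← hw1]
  refine Finset.sum_congr rfl fun i _ => ?_
  by_cases hi : w i = 0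
  · simp [hi]
  · rw [integral_const_mul, hmean i hi, mul_one]

lemma memLp_of_integrable_abs_pow {f : Ω → ℝ} (hf : AEStronglyMeasurable f μ) {p : ℕ}
    (hp : p ≠ 0) (h : Integrable (fun ω => |f ω| ^ p) μ) : MemLp f p μ := by
  rw [← integrable_norm_rpow_iff hf (by exact_mod_cast hp) (by simp)]
  simpa [Real.norm_eq_abs] using h

lemma memLp_of_memLp_sum_mul (hw0 : ∀ i, 0 ≤ w i) (hZ0 : ∀ i ω, 0 ≤ Z i ω)
    {p : ENNReal} (hW : MemLp (fun ω => ∑ i, w i * Z i ω) p μ) {i : ι} (hi : w i ≠ 0)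
    (hZm : AEStronglyMeasurable (Z i) μ) : MemLp (Z i) p μ := by
  refine hW.of_le_mul (c := (w i)⁻¹) hZm (Filter.Eventually.of_forall fun ω => ?_)
  have hle : w i * Z i ω ≤ ∑ j, w j * Z j ω :=
    Finset.single_le_sum (f := fun j => w j * Z j ω)
      (fun j _ => mul_nonneg (hw0 j) (hZ0 j ω)) (Finset.mem_univ i)
  rwa [Real.norm_of_nonneg (hZ0 i ω),
    Real.norm_of_nonneg ((mul_nonneg (hw0 i) (hZ0 i ω)).trans hle),
    le_inv_mul_iff₀ ((hw0 i).lt_of_ne' hi)]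

lemma integral_abs_sum_mul_sub_one_pow_le [IsFiniteMeasure μ] (hw0 : ∀ i, 0 ≤ w i)
    (hw1 : ∑ i, w i = 1) (hZ0 : ∀ i ω, 0 ≤ Z i ω)
    (hZm : ∀ i, w i ≠ 0 → AEStronglyMeasurable (Z i) μ) {p : ℕ} (hp : p ≠ 0) {B : ℝ}
    (hmom : ∀ i, w i ≠ 0 → ∫ ω, |Z i ω - 1| ^ p ∂μ ≤ B) :
    ∫ ω, |∑ i, w i * Z i ω - 1| ^ p ∂μ ≤ B := by
  obtain ⟨i₀, -, hi₀⟩ := Finset.exists_ne_zero_of_sum_ne_zero (hw1.trans_ne one_ne_zero)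
  have hB : 0 ≤ B := (integral_nonneg fun _ => by positivity).trans (hmom i₀ hi₀)
  set W : Ω → ℝ := fun ω => ∑ i, w i * Z i ω
  by_cases hint : Integrable (fun ω => |W ω - 1| ^ p) μ
  swap
  · rwa [integral_undef hint]
  have hWm : AEStronglyMeasurable W μ := Finset.aestronglyMeasurable_fun_sum _ fun i _ => by
    by_cases hi : w i = 0
    · simp [hi, aestronglyMeasurable_const]
    · exact (hZm i hi).const_mul _
  have hW : MemLp W p μ := by
    simpa using (memLp_of_integrable_abs_pow (hWm.sub aestronglyMeasurable_const) hp hint).add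
      (memLp_const 1)
  have hterm : ∀ i, Integrable (fun ω => w i * |Z i ω - 1| ^ p) μ := fun i => by
    by_cases hi : w i = 0
    · simp [hi]
    have hZ := memLp_of_memLp_sum_mul hw0 hZ0 hW hi (hZm i hi)
    simpa [Real.norm_eq_abs] using
      ((hZ.sub (memLp_const 1)).integrable_norm_pow hp).const_mul (w i)
  calc ∫ ω, |W ω - 1| ^ p ∂μ ≤ ∫ ω, ∑ i, w i * |Z i ω - 1| ^ p ∂μ :=
        integral_mono hint (integrable_finsetSum _ fun i _ => hterm i)
          fun ω => abs_sum_mul_sub_one_pow_le hw0 hw1 _ p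
    _ = ∑ i, w i * ∫ ω, |Z i ω - 1| ^ p ∂μ := by
        rw [integral_finsetSum _ fun i _ => hterm i]
        simp only [integral_const_mul]
    _ ≤ ∑ i, w i * B := Finset.sum_le_sum fun i _ => by
        by_cases hi : w i = 0
        · simp [hi]
        · exact mul_le_mul_of_nonneg_left (hmom i hi) (hw0 i)
    _ = B := by rw [← Finset.sum_mul, hw1, one_mul]

end Moments

lemma HasStrongJL.div_sqNorm {Ω : Type*} [MeasurableSpace Ω] {μ : Measure Ω}
    {ι κ : Type*} [Fintype ι] [Fintype κ] {S : Ω → Matrix ι κ ℝ} {ε δ : ℝ}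
    (h : HasStrongJL μ S ε δ) {x : κ → ℝ} (hx : sqNorm x ≠ 0) :
    (∀ p : ℕ, 2 ≤ p → (p : ℝ) ≤ Real.log (1 / δ) →
      (∫ ω, |sqNorm (S ω *ᵥ x) / sqNorm x - 1| ^ p ∂μ) ≤
        (ε / Real.exp 1) ^ p * ((p : ℝ) / Real.log (1 / δ)) ^ ((p : ℝ) / 2)) ∧
    (∫ ω, sqNorm (S ω *ᵥ x) / sqNorm x ∂μ) = 1 := by
  have hsq : (Real.sqrt (sqNorm x))⁻¹ ^ 2 = (sqNorm x)⁻¹ := by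
    rw [inv_pow, Real.sq_sqrt (sqNorm_nonneg x)]
  have hunit : sqNorm ((Real.sqrt (sqNorm x))⁻¹ • x) = 1 := by
    rw [sqNorm_smul, hsq, inv_mul_cancel₀ hx]
  simpa [mulVec_smul, sqNorm_smul, hsq, inv_mul_eq_div] using h _ hunit

theorem strongJL_kronecker_id_general
    {Ω : Type*} [MeasurableSpace Ω] (μ : Measure Ω) [IsProbabilityMeasure μ]
    {m n : ℕ} (S : Ω → Matrix (Fin m) (Fin n) ℝ) (ε δ : ℝ)
    (h : HasStrongJL μ S ε δ)
    (a b : ℕ) :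
    HasStrongJL μ
      (fun ω => ((1 : Matrix (Fin a) (Fin a) ℝ) ⊗ₖ S ω) ⊗ₖ (1 : Matrix (Fin b) (Fin b) ℝ))
      ε δ := by
  intro y hy
  set w : Fin a × Fin b → ℝ := fun k => sqNorm (midSlice y k)
  set Z : Fin a × Fin b → Ω → ℝ := fun k ω => sqNorm (S ω *ᵥ midSlice y k) / w k
  have hw1 : ∑ k, w k = 1 := (sum_sqNorm_midSlice y).trans hy
  have hsplit : ∀ ω, sqNorm ((((1 : Matrix (Fin a) (Fin a) ℝ) ⊗ₖ S ω) ⊗ₖ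
      (1 : Matrix (Fin b) (Fin b) ℝ)) *ᵥ y) = ∑ k, w k * Z k ω := fun ω => by
    simp only [sqNorm_one_kronecker_kronecker_one_mulVec, w, Z, sqNorm_mul_div_sqNorm]
  have hZ0 : ∀ k ω, 0 ≤ Z k ω := fun k ω => div_nonneg (sqNorm_nonneg _) (sqNorm_nonneg _)
  have hZm : ∀ k, w k ≠ 0 → AEStronglyMeasurable (Z k) μ := fun k hk =>
    (Integrable.of_integral_ne_zero
      ((h.div_sqNorm hk).2.trans_ne one_ne_zero)).aestronglyMeasurable
  simp only [hsplit]
  exact ⟨fun p hp2 hpL => integral_abs_sum_mul_sub_one_pow_le (fun k => sqNorm_nonneg _) hw1 hZ0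
      hZm (by omega) fun k hk => (h.div_sqNorm hk).1 p hp2 hpL,
    integral_sum_mul_eq_one hw1 fun k hk => (h.div_sqNorm hk).2⟩

/-- If a random `m×n` matrix `S` has the strong `(ε,δ)`-JL moment property,
then for any positive integers `a, b`, the random matrix `M = I_a ⊗ S ⊗ I_b` also has the
strong `(ε,δ)`-JL moment property. -/
theorem strongJL_kronecker_id
    {Ω : Type*} [MeasurableSpace Ω] (μ : Measure Ω) [IsProbabilityMeasure μ]
    {m n : ℕ} (S : Ω → Matrix (Fin m) (Fin n) ℝ) (ε δ : ℝ)
    (hε : ε ∈ Set.Ioo (0 : ℝ) 1) (hδ : δ ∈ Set.Ioo (0 : ℝ) 1)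
    (h : HasStrongJL μ S ε δ)
    (a b : ℕ) (ha : 0 < a) (hb : 0 < b) :
    HasStrongJL μ
      (fun ω => ((1 : Matrix (Fin a) (Fin a) ℝ) ⊗ₖ S ω) ⊗ₖ (1 : Matrix (Fin b) (Fin b) ℝ))
      ε δ :=
  strongJL_kronecker_id_general μ S ε δ h a b
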